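/- The monotonicity rule for anonymity atoms is sound: if M ⊨_X 𝗑𝗒 Υ 𝗓 then M ⊨_X 𝗑 Υ 𝗓𝘂, for any variable sequence 𝘂 with values in the domain of X. -/

import Mathlib

namespace TeamSem

variable {M : Type}

/-- A team is a set of assignments (variables are natural numbers). -/
abbrev Team (M : Type) := Set (ℕ → M)

/-- Lax existential extension of a team `X` along variable `x` by a choice function `F`. -/
def extT (X : Team M) (x : ℕ) (F : (ℕ → M) → Set M) : Team M :=
  {t | ∃ s ∈ X, ∃ a ∈ F s, t = Function.update s x a}

/-- Universal extension of a team `X` along variable `x`. -/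
def extAll (X : Team M) (x : ℕ) : Team M :=
  {t | ∃ s ∈ X, ∃ a : M, t = Function.update s x a}

/-- Team semantics of the anonymity atom `a Υ b`. -/
def anonSat (X : Team M) (a b : List ℕ) : Prop :=
  ∀ s ∈ X, ∃ s' ∈ X, a.map s = a.map s' ∧ b.map s ≠ b.map s'

theorem map_eq_map_of_subset {α β : Type*} {a a' : List α} (h : a' ⊆ a) {s t : α → β}
    (hst : a.map s = a.map t) : a'.map s = a'.map t :=
  List.map_inj_left.2 fun i hi => List.map_inj_left.1 hst i (h hi)

theorem anonSat.mono {X : Team M} {a a' b b' : List ℕ} (ha : a' ⊆ a) (hb : b ⊆ b')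
    (h : anonSat X a b) : anonSat X a' b' := by
  intro s hs
  obtain ⟨s', hs', h_agree, h_differ⟩ := h s hs
  exact ⟨s', hs', map_eq_map_of_subset ha h_agree, mt (map_eq_map_of_subset hb) h_differ⟩

theorem anonymity_monotonicity (X : Team M) (x y z u : List ℕ)
    (h : anonSat X (x ++ y) z) :
    anonSat X x (z ++ u) :=
  h.mono (List.subset_append_left x y) (List.subset_append_left z u)

end TeamSem
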